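/- Let u be smooth on ℝ³ × [0, T] with |∂ₜ∂^α u(x,t)| ≤ C for all (x,t) in B(x₀, 1/8) × [0,T], and suppose u(·,0) = u₀. Assume further that for every λ > 0 the rescaling u^λ(x,t) = λu(λx, λ²t) also satisfies the same bound with the same constant (same x₀, same T). Then for y = x₀/√t with 0 < t < T, writing U := u(·,1) and using that ∂^α u₀ is (−1−|α|)-homogeneous, one obtains |∂^α(U − u₀)(y)| ≤ C' |y|^{−3−|α|} for all |y| > |x₀|/√T, with C' depending on C, α and x₀. -/

import Mathlib

open MeasureTheory Real Set Filter

/-- Euclidean norm on `Fin 3 → ℝ`. -/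
noncomputable def enorm3 (x : Fin 3 → ℝ) : ℝ := Real.sqrt (∑ i, x i ^ 2)

/-- Partial derivative in direction `i`. -/
noncomputable def pd (i : Fin 3) (f : (Fin 3 → ℝ) → ℝ) (x : Fin 3 → ℝ) : ℝ :=
  fderiv ℝ f x (Pi.single i 1)

/-- Iterated partial derivative along a list of directions (multi-index). -/
noncomputable def pdIter : List (Fin 3) → ((Fin 3 → ℝ) → ℝ) → ((Fin 3 → ℝ) → ℝ)
  | [], f => f
  | i :: l, f => pd i (pdIter l f)

/-- Laplacian. -/
noncomputable def lap (f : (Fin 3 → ℝ) → ℝ) (x : Fin 3 → ℝ) : ℝ :=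
  ∑ j : Fin 3, pd j (pd j f) x

/-- Divergence of a vector field. -/
noncomputable def vdiv (v : (Fin 3 → ℝ) → Fin 3 → ℝ) (x : Fin 3 → ℝ) : ℝ :=
  ∑ j : Fin 3, pd j (fun y => v y j) x

/-- Curl of a vector field. -/
noncomputable def vcurl (v : (Fin 3 → ℝ) → Fin 3 → ℝ) (x : Fin 3 → ℝ) : Fin 3 → ℝ :=
  ![pd 1 (fun y => v y 2) x - pd 2 (fun y => v y 1) x,
    pd 2 (fun y => v y 0) x - pd 0 (fun y => v y 2) x,
    pd 0 (fun y => v y 1) x - pd 1 (fun y => v y 0) x]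

/-- Parabolic cylinder `Q(z, r) = B(x, r) × (t - r², t)`. -/
def Qcyl (z : (Fin 3 → ℝ) × ℝ) (r : ℝ) : Set ((Fin 3 → ℝ) × ℝ) :=
  {p | enorm3 (p.1 - z.1) < r ∧ p.2 ∈ Set.Ioo (z.2 - r ^ 2) z.2}

/-- Parabolic cylinder centered at the origin. -/
def Qr (r : ℝ) : Set ((Fin 3 → ℝ) × ℝ) := Qcyl (0, 0) r

/-- The Gaussian heat kernel with diffusivity `ν` in three space dimensions. -/
noncomputable def heatKernel (ν : ℝ) (x : Fin 3 → ℝ) (t : ℝ) : ℝ :=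
  (4 * π * ν * t) ^ (-(3 : ℝ) / 2) * Real.exp (-(enorm3 x) ^ 2 / (4 * ν * t))

/-- Heat extension `e^{νΔt} f` of a vector field by convolution with the heat kernel. -/
noncomputable def heatExt (ν : ℝ) (f : (Fin 3 → ℝ) → Fin 3 → ℝ)
    (x : Fin 3 → ℝ) (t : ℝ) : Fin 3 → ℝ :=
  fun i => ∫ y : Fin 3 → ℝ, heatKernel ν (x - y) t * f y i

lemma pdIter_congr (L : List (Fin 3)) {f g : (Fin 3 → ℝ) → ℝ} (h : f = g) (x : Fin 3 → ℝ) :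
    pdIter L f x = pdIter L g x := by rw [h]

lemma pdIter_contDiff_joint (L : List (Fin 3)) (F : (Fin 3 → ℝ) → ℝ → ℝ)
    (hF : ContDiff ℝ (⊤ : ℕ∞) (fun p : (Fin 3 → ℝ) × ℝ => F p.1 p.2)) :
    ContDiff ℝ (⊤ : ℕ∞) (fun p : (Fin 3 → ℝ) × ℝ => pdIter L (fun y => F y p.2) p.1) := by
  induction L generalizing F with
  | nil => simpa [pdIter] using hF
  | cons i l ih =>
    have h1 := ih F hF
    have h2 : ContDiff ℝ (⊤ : ℕ∞) (fun q : ((Fin 3 → ℝ) × ℝ) × (Fin 3 → ℝ) =>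
        pdIter l (fun y => F y q.1.2) q.2) :=
      h1.comp (contDiff_snd.prodMk (contDiff_snd.comp contDiff_fst))
    have h3 : ContDiff ℝ (⊤ : ℕ∞) (fun p : (Fin 3 → ℝ) × ℝ =>
        fderiv ℝ (fun y => pdIter l (fun z => F z p.2) y) p.1) :=
      ContDiff.fderiv (f := fun (p : (Fin 3 → ℝ) × ℝ) y => pdIter l (fun z => F z p.2) y)
        (g := fun p => p.1) h2 contDiff_fst (by simp)
    have h4 := h3.clm_apply (contDiff_const (c := (Pi.single i 1 : Fin 3 → ℝ)))
    simpa [pdIter, pd] using h4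

lemma pdIter_contDiff (L : List (Fin 3)) (f : (Fin 3 → ℝ) → ℝ) (hf : ContDiff ℝ (⊤ : ℕ∞) f) :
    ContDiff ℝ (⊤ : ℕ∞) (pdIter L f) := by
  have h := (pdIter_contDiff_joint L (fun y _ => f y) (hf.comp contDiff_fst)).comp
    ((contDiff_id.prodMk contDiff_const) :
      ContDiff ℝ (⊤ : ℕ∞) fun x : Fin 3 → ℝ => (x, (0 : ℝ)))
  simpa [Function.comp_def] using h

lemma pdIter_sub (L : List (Fin 3)) (f g : (Fin 3 → ℝ) → ℝ)
    (hf : ContDiff ℝ (⊤ : ℕ∞) f) (hg : ContDiff ℝ (⊤ : ℕ∞) g) (x : Fin 3 → ℝ) :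
    pdIter L (fun y => f y - g y) x = pdIter L f x - pdIter L g x := by
  induction L generalizing x with
  | nil => simp [pdIter]
  | cons i l ih =>
    have he : (fun y => pdIter l (fun z => f z - g z) y)
        = fun y => pdIter l f y - pdIter l g y := funext fun y => ih y
    show pd i (pdIter l fun y => f y - g y) x = pd i (pdIter l f) x - pd i (pdIter l g) x
    rw [show pdIter l (fun y => f y - g y) = _ from he]
    unfold pd
    rw [fderiv_fun_sub ((pdIter_contDiff l f hf).differentiable (by simp) x)
      ((pdIter_contDiff l g hg).differentiable (by simp) x)]
    simp

lemma pd_scale (g : (Fin 3 → ℝ) → ℝ) (hg : ContDiff ℝ (⊤ : ℕ∞) g) (a lam : ℝ) (i : Fin 3)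
    (x : Fin 3 → ℝ) :
    pd i (fun y => a * g (lam • y)) x = a * lam * pd i g (lam • x) := by
  have h1 : HasFDerivAt (fun y : Fin 3 → ℝ => g (lam • y))
      ((fderiv ℝ g (lam • x)).comp (lam • ContinuousLinearMap.id ℝ (Fin 3 → ℝ))) x := by
    have hd := (hg.differentiable (by simp) (lam • x)).hasFDerivAt
    exact hd.comp x ((lam • ContinuousLinearMap.id ℝ (Fin 3 → ℝ)).hasFDerivAt)
  have h2 := h1.const_mul a
  unfold pd
  rw [h2.fderiv]
  simp [_root_.map_smul, smul_eq_mul]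
  ring

lemma pdIter_scale (L : List (Fin 3)) (f : (Fin 3 → ℝ) → ℝ) (hf : ContDiff ℝ (⊤ : ℕ∞) f)
    (a lam : ℝ) (x : Fin 3 → ℝ) :
    pdIter L (fun y => a * f (lam • y)) x = a * lam ^ L.length * pdIter L f (lam • x) := by
  induction L generalizing x with
  | nil => simp [pdIter]
  | cons i l ih =>
    have he : (fun y => pdIter l (fun z => a * f (lam • z)) y)
        = fun y => (a * lam ^ l.length) * pdIter l f (lam • y) := funext fun y => ih y
    show pd i (pdIter l fun z => a * f (lam • z)) x = _
    rw [show pdIter l (fun z => a * f (lam • z)) = _ from he,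
      pd_scale (pdIter l f) (pdIter_contDiff l f hf) _ lam i x]
    show _ = a * lam ^ (l.length + 1) * pd i (pdIter l f) (lam • x)
    ring

lemma enorm3_smul (c : ℝ) (hc : 0 ≤ c) (x : Fin 3 → ℝ) : enorm3 (c • x) = c * enorm3 x := by
  simp only [enorm3, Pi.smul_apply, smul_eq_mul, mul_pow]
  rw [← Finset.mul_sum, Real.sqrt_mul (by positivity), Real.sqrt_sq hc]

lemma enorm3_pos {x : Fin 3 → ℝ} (hx : x ≠ 0) : 0 < enorm3 x := by
  rw [enorm3]
  apply Real.sqrt_pos.mpr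
  have : ∃ i, x i ≠ 0 := by
    by_contra h; push_neg at h; exact hx (funext h)
  obtain ⟨i, hi⟩ := this
  exact Finset.sum_pos' (fun j _ => sq_nonneg _) ⟨i, Finset.mem_univ i, by positivity⟩

/-- the scaling computation from the proof of Theorem 1.1: a
uniform time-Lipschitz bound on `∂^α u^λ` near `x₀`, valid for all rescalings
`u^λ`, together with `(−1−|α|)`-homogeneity of `∂^α u₀`, yields the decay
`|∂^α(U − u₀)(y)| ≤ C'|y|^{−3−|α|}` along `y = x₀/√t`, `0 < t < T`. -/
theorem stmt18 (T : ℝ) (hT : 0 < T) (x₀ : Fin 3 → ℝ) (hx₀ : x₀ ≠ 0)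
    (u : (Fin 3 → ℝ) → ℝ → Fin 3 → ℝ) (u₀ : (Fin 3 → ℝ) → Fin 3 → ℝ)
    (hu : ContDiff ℝ (⊤ : ℕ∞) (fun p : (Fin 3 → ℝ) × ℝ => u p.1 p.2))
    (hinit : ∀ x, u x 0 = u₀ x)
    (L : List (Fin 3)) (C : ℝ)
    (hbd : ∀ lam : ℝ, 0 < lam → ∀ x : Fin 3 → ℝ, enorm3 (x - x₀) < 1 / 8 →
      ∀ t ∈ Set.Icc (0 : ℝ) T, ∀ i : Fin 3,
      |deriv (fun s => pdIter L (fun y => lam * u (lam • y) (lam ^ 2 * s) i) x) t| ≤ C)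
    (hhomα : ∀ μ : ℝ, 0 < μ → ∀ x : Fin 3 → ℝ, x ≠ 0 → ∀ i : Fin 3,
      pdIter L (fun y => u₀ y i) (μ • x)
        = μ ^ (-(1 : ℝ) - (L.length : ℝ)) * pdIter L (fun y => u₀ y i) x) :
    ∃ C' : ℝ, 0 ≤ C' ∧ ∀ t : ℝ, 0 < t → t < T → ∀ i : Fin 3,
      |pdIter L (fun y => u y 1 i - u₀ y i) ((Real.sqrt t)⁻¹ • x₀)|
        ≤ C' * enorm3 ((Real.sqrt t)⁻¹ • x₀) ^ (-(3 : ℝ) - (L.length : ℝ)) := by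
  classical
  set k := L.length with hk
  have ha : 0 < enorm3 x₀ := enorm3_pos hx₀
  set a := enorm3 x₀ with haa
  -- component smoothness
  have hu_i : ∀ i : Fin 3, ContDiff ℝ (⊤ : ℕ∞) (fun p : (Fin 3 → ℝ) × ℝ => u p.1 p.2 i) :=
    fun i => (contDiff_pi.mp hu) i
  refine ⟨|C| * a ^ ((3 : ℝ) + k), by positivity, ?_⟩
  intro t ht htT i
  set lam := (Real.sqrt t)⁻¹ with hlamdef
  have hst : 0 < Real.sqrt t := Real.sqrt_pos.mpr ht
  have hlam : 0 < lam := inv_pos.mpr hst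
  have hlam2t : lam ^ 2 * t = 1 := by
    rw [hlamdef, inv_pow, Real.sq_sqrt ht.le]
    exact inv_mul_cancel₀ (ne_of_gt ht)
  -- smoothness of relevant functions
  have hU : ContDiff ℝ (⊤ : ℕ∞) (fun y => u y 1 i) :=
    (hu_i i).comp (contDiff_id.prodMk contDiff_const)
  have hu0eq : (fun y : Fin 3 → ℝ => u₀ y i) = fun y => u y 0 i := by
    funext y; rw [hinit]
  have hU0 : ContDiff ℝ (⊤ : ℕ∞) (fun y : Fin 3 → ℝ => u₀ y i) := by
    rw [hu0eq]; exact (hu_i i).comp (contDiff_id.prodMk contDiff_const)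
  -- the rescaled function Φ
  set Φ : ℝ → ℝ := fun s => pdIter L (fun y => lam * u (lam • y) (lam ^ 2 * s) i) x₀
    with hΦdef
  have hFj : ContDiff ℝ (⊤ : ℕ∞) (fun p : (Fin 3 → ℝ) × ℝ =>
      lam * u (lam • p.1) (lam ^ 2 * p.2) i) := by
    have hmap : ContDiff ℝ (⊤ : ℕ∞) (fun p : (Fin 3 → ℝ) × ℝ =>
        ((lam • p.1, lam ^ 2 * p.2) : (Fin 3 → ℝ) × ℝ)) :=
      (contDiff_fst.const_smul lam).prodMk (contDiff_const.mul contDiff_snd)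
    exact contDiff_const.mul ((hu_i i).comp hmap)
  have hΦsm : ContDiff ℝ (⊤ : ℕ∞) Φ := by
    have := (pdIter_contDiff_joint L (fun y s => lam * u (lam • y) (lam ^ 2 * s) i) hFj).comp
      ((contDiff_const.prodMk contDiff_id) : ContDiff ℝ (⊤ : ℕ∞) fun s : ℝ => ((x₀, s) : (Fin 3 → ℝ) × ℝ))
    simpa [hΦdef, Function.comp_def] using this
  -- MVT bound: |Φ t - Φ 0| ≤ C * t
  have hx₀ball : enorm3 (x₀ - x₀) < 1 / 8 := by
    simp [enorm3, sub_self]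
  have hbound : ∀ s ∈ Set.Ico (0 : ℝ) t, ‖deriv Φ s‖ ≤ C := by
    intro s hs
    have hsIcc : s ∈ Set.Icc (0 : ℝ) T := ⟨hs.1, le_of_lt (lt_of_lt_of_le hs.2 htT.le)⟩
    simpa [Real.norm_eq_abs] using hbd lam hlam x₀ hx₀ball s hsIcc i
  have hmvt : ‖Φ t - Φ 0‖ ≤ C * (t - 0) := by
    refine norm_image_sub_le_of_norm_deriv_le_segment'
      (f' := deriv Φ) (fun s _ => ((hΦsm.differentiable (by simp) s).hasDerivAt).hasDerivWithinAt)
      hbound t ⟨ht.le, le_refl t⟩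
  have hC : 0 ≤ C := le_trans (abs_nonneg _) (hbd 1 one_pos x₀ hx₀ball 0
    ⟨le_refl 0, hT.le⟩ i)
  -- identify Φ t and Φ 0 via scaling
  have hΦt : Φ t = lam * lam ^ k * pdIter L (fun y => u y 1 i) (lam • x₀) := by
    have he : (fun y => lam * u (lam • y) (lam ^ 2 * t) i)
        = fun y => lam * (fun z => u z 1 i) (lam • y) := by
      funext y; rw [hlam2t]
    show pdIter L (fun y => lam * u (lam • y) (lam ^ 2 * t) i) x₀ = _
    rw [pdIter_congr L he x₀, pdIter_scale L _ hU lam lam x₀]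
  have hΦ0 : Φ 0 = lam * lam ^ k * pdIter L (fun y => u₀ y i) (lam • x₀) := by
    have he : (fun y => lam * u (lam • y) (lam ^ 2 * 0) i)
        = fun y => lam * (fun z => u₀ z i) (lam • y) := by
      funext y; rw [mul_zero, hinit]
    show pdIter L (fun y => lam * u (lam • y) (lam ^ 2 * 0) i) x₀ = _
    rw [pdIter_congr L he x₀, pdIter_scale L _ hU0 lam lam x₀]
  -- split the difference
  have hsplit : pdIter L (fun y => u y 1 i - u₀ y i) (lam • x₀)
      = pdIter L (fun y => u y 1 i) (lam • x₀) - pdIter L (fun y => u₀ y i) (lam • x₀) :=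
    pdIter_sub L _ _ hU hU0 (lam • x₀)
  have hdiff : Φ t - Φ 0 = lam ^ (k + 1) * pdIter L (fun y => u y 1 i - u₀ y i) (lam • x₀) := by
    rw [hsplit, hΦt, hΦ0]; ring
  -- final arithmetic
  have hlampow : (0 : ℝ) < lam ^ (k + 1) := pow_pos hlam _
  have habs : |pdIter L (fun y => u y 1 i - u₀ y i) (lam • x₀)| ≤ C * t / lam ^ (k + 1) := by
    rw [le_div_iff₀ hlampow]
    have : |pdIter L (fun y => u y 1 i - u₀ y i) (lam • x₀)| * lam ^ (k + 1)
        = |Φ t - Φ 0| := by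
      rw [hdiff, abs_mul, abs_of_pos hlampow]; ring
    rw [this]
    simpa [Real.norm_eq_abs] using hmvt
  have htlam : t = (lam ^ 2)⁻¹ := by
    field_simp at hlam2t ⊢
    linarith [hlam2t]
  have henorm : enorm3 (lam • x₀) = lam * a := enorm3_smul lam hlam.le x₀
  rw [henorm]
  have hrpow : (lam * a) ^ (-(3 : ℝ) - (k : ℝ))
      = lam ^ (-(3 : ℝ) - (k : ℝ)) * a ^ (-(3 : ℝ) - (k : ℝ)) :=
    Real.mul_rpow hlam.le ha.le
  have hlamr : lam ^ (-(3 : ℝ) - (k : ℝ)) = (lam ^ (k + 3))⁻¹ := by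
    rw [show (-(3 : ℝ) - (k : ℝ)) = -((k + 3 : ℕ) : ℝ) by push_cast; ring,
      Real.rpow_neg hlam.le, Real.rpow_natCast]
  have haar : a ^ ((3 : ℝ) + k) * a ^ (-(3 : ℝ) - (k : ℝ)) = 1 := by
    rw [← Real.rpow_add ha]
    norm_num
  calc |pdIter L (fun y => u y 1 i - u₀ y i) (lam • x₀)|
      ≤ C * t / lam ^ (k + 1) := habs
    _ = C * (lam ^ (k + 3))⁻¹ := by
        rw [htlam, div_eq_mul_inv, mul_assoc, ← mul_inv, ← pow_add,
          show 2 + (k + 1) = k + 3 from by ring]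
    _ ≤ |C| * (lam ^ (k + 3))⁻¹ := by
        apply mul_le_mul_of_nonneg_right (le_abs_self C)
        positivity
    _ = |C| * a ^ ((3 : ℝ) + k) * ((lam * a) ^ (-(3 : ℝ) - (k : ℝ))) := by
        rw [hrpow, hlamr]
        calc |C| * (lam ^ (k + 3))⁻¹
            = |C| * (a ^ ((3:ℝ) + k) * a ^ (-(3:ℝ) - (k:ℝ))) * (lam ^ (k + 3))⁻¹ := by
              rw [haar]; ring
          _ = |C| * a ^ ((3:ℝ) + k) * ((lam ^ (k+3))⁻¹ * a ^ (-(3:ℝ) - (k:ℝ))) := by ring
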